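/- arXiv:2012.01422 — 3 statements merged into one kernel-verified Lean document; each statement's English description precedes it below -/
import Mathlib

section
/- Let h be the abelian Lie subalgebra of Der(ℂ[x,y]) spanned by ∂/∂x and ∂/∂y. The normalizer of h in the Lie algebra of all derivations of ℂ[x,y] consists exactly of the derivations of the form (a₁₁x + a₁₂y + c₁)·∂/∂x + (a₂₁x + a₂₂y + c₂)·∂/∂y with aᵢⱼ, cᵢ ∈ ℂ. -/
open MvPolynomial

noncomputable section

/-- The polynomial ring `ℂ[x,y]`, with `x = X 0`, `y = X 1`. -/
abbrev R2 : Type := MvPolynomial (Fin 2) ℂ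

/-- The Lie algebra of derivations of `ℂ[x,y]`. -/
abbrev Der2 : Type := Derivation ℂ R2 R2

/-- The variable `x`. -/
def Xv : R2 := X 0

/-- The variable `y`. -/
def Yv : R2 := X 1

/-- The vector field (derivation) `p·∂/∂x + q·∂/∂y`. -/
def vf (p q : R2) : Der2 := MvPolynomial.mkDerivation ℂ ![p, q]

/-
A derivation is `E = p ∂ₓ + q ∂ᵧ` with `p = E x`, `q = E y`, and `⁅E, ∂ᵢ⁆ = -(∂ᵢp ∂ₓ + ∂ᵢq ∂ᵧ)`
(evaluate on `x` and `y`: `∂ᵢ` sends them to constants, which `E` kills). So `E` normalizes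
`span {∂ₓ, ∂ᵧ}` iff all first partials of `p` and `q` are constants. In characteristic zero a
polynomial is determined by its constant term and its partials, since `∂ᵢ` multiplies the
coefficient of a monomial by its (nonzero) exponent; hence `p` and `q` are affine.
-/

namespace MvPolynomial

variable {σ R : Type*} [CommRing R]

theorem lie_pderiv_apply_X (D : Derivation R (MvPolynomial σ R) (MvPolynomial σ R)) (i j : σ) :
    ⁅D, pderiv i⁆ (X j) = -pderiv i (D (X j)) := by
  classical
  rw [Derivation.commutator_apply, pderiv_X, Pi.single_apply]
  split_ifs <;> simp

variable [IsAddTorsionFree R]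

theorem pderiv_ext {p q : MvPolynomial σ R} (hD : ∀ i, pderiv i p = pderiv i q)
    (hc : constantCoeff p = constantCoeff q) : p = q := by
  rw [← coe_inj]
  refine MvPowerSeries.pderiv.ext (fun i => ?_) ?_
  · rw [MvPowerSeries.pderiv_coe, MvPowerSeries.pderiv_coe, hD]
  · simpa only [← MvPowerSeries.coeff_zero_eq_constantCoeff_apply, coeff_coe,
      ← constantCoeff_eq] using hc

theorem eq_sum_C_mul_X_add_C_of_pderiv_eq_C [Fintype σ] {p : MvPolynomial σ R} {a : σ → R}
    (h : ∀ i, pderiv i p = C (a i)) : p = ∑ i, C (a i) * X i + C (constantCoeff p) := by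
  classical
  refine pderiv_ext (fun i => ?_) (by simp)
  simp [h, pderiv_X, Pi.single_apply]

end MvPolynomial

theorem forall_lie_mem_span_iff {R L : Type*} [CommRing R] [LieRing L] [LieAlgebra R L]
    (E : L) (S : Set L) :
    (∀ W ∈ Submodule.span R S, ⁅E, W⁆ ∈ Submodule.span R S) ↔
      ∀ W ∈ S, ⁅E, W⁆ ∈ Submodule.span R S := by
  have := Submodule.map_span_le (LieAlgebra.ad R L E : L →ₗ[R] L) S (Submodule.span R S)
  simpa [Submodule.map_le_iff_le_comap, SetLike.le_def] using this

theorem vf_apply_X (p q : R2) (i : Fin 2) : vf p q (X i) = ![p, q] i :=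
  mkDerivation_X ..

theorem eq_vf_iff (E : Der2) (p q : R2) : E = vf p q ↔ E (X 0) = p ∧ E (X 1) = q := by
  constructor
  · rintro rfl
    exact ⟨vf_apply_X p q 0, vf_apply_X p q 1⟩
  · rintro ⟨hp, hq⟩
    refine derivation_ext fun i => ?_
    fin_cases i <;> simp [vf_apply_X, hp, hq]

theorem vf_one_zero : vf 1 0 = pderiv 0 := by
  refine derivation_ext fun i => ?_
  fin_cases i <;> simp [vf_apply_X, pderiv_X]

theorem vf_zero_one : vf 0 1 = pderiv 1 := by
  refine derivation_ext fun i => ?_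
  fin_cases i <;> simp [vf_apply_X, pderiv_X]

theorem mem_span_pderiv_iff (D : Der2) :
    D ∈ Submodule.span ℂ ({pderiv 0, pderiv 1} : Set Der2) ↔
      ∀ j, D (X j) ∈ (C : ℂ →+* R2).range := by
  rw [Submodule.mem_span_pair]
  constructor
  · rintro ⟨a, b, rfl⟩ j
    fin_cases j
    · exact ⟨a, by simp [pderiv_X, smul_eq_C_mul]⟩
    · exact ⟨b, by simp [pderiv_X, smul_eq_C_mul]⟩
  · intro h
    obtain ⟨⟨a, ha⟩, ⟨b, hb⟩⟩ := h 0, h 1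
    refine ⟨a, b, derivation_ext fun i => ?_⟩
    fin_cases i
    · simpa [pderiv_X, smul_eq_C_mul] using ha
    · simpa [pderiv_X, smul_eq_C_mul] using hb

theorem exists_affine_iff (p : R2) :
    (∃ a b c : ℂ, p = C a * Xv + C b * Yv + C c) ↔
      ∀ i, pderiv i p ∈ (C : ℂ →+* R2).range := by
  constructor
  · rintro ⟨a, b, c, rfl⟩ i
    fin_cases i
    · exact ⟨a, by simp [Xv, Yv]⟩
    · exact ⟨b, by simp [Xv, Yv]⟩
  · intro h
    choose a ha using h
    refine ⟨a 0, a 1, constantCoeff p, ?_⟩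
    simpa [Fin.sum_univ_two, Xv, Yv] using
      eq_sum_C_mul_X_add_C_of_pderiv_eq_C fun i => (ha i).symm

/-- the normalizer of h = span{∂/∂x, ∂/∂y} in Der(ℂ[x,y]) consists exactly
of the affine vector fields (a₁₁x + a₁₂y + c₁)·∂/∂x + (a₂₁x + a₂₂y + c₂)·∂/∂y. -/
theorem stmt7 :
    {E : Der2 | ∀ W ∈ Submodule.span ℂ ({vf 1 0, vf 0 1} : Set Der2),
        ⁅E, W⁆ ∈ Submodule.span ℂ ({vf 1 0, vf 0 1} : Set Der2)} =
      {E : Der2 | ∃ a₁₁ a₁₂ c₁ a₂₁ a₂₂ c₂ : ℂ,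
        E = vf (C a₁₁ * Xv + C a₁₂ * Yv + C c₁) (C a₂₁ * Xv + C a₂₂ * Yv + C c₂)} := by
  ext E
  rw [Set.mem_ofPred_eq, Set.mem_ofPred_eq, forall_lie_mem_span_iff, vf_one_zero, vf_zero_one]
  simp only [Set.forall_mem_insert, Set.mem_singleton_iff, forall_eq, mem_span_pderiv_iff,
    lie_pderiv_apply_X, neg_mem_iff, eq_vf_iff, exists_and_left, exists_and_right, exists_affine_iff,
    Fin.forall_fin_two]
  exact and_and_and_comm
end
end

section
/- Every maximal solvable Lie subalgebra of gl(2,ℝ) is conjugate (by an element of GL(2,ℝ)) either to the algebra of upper triangular 2×2 real matrices, or to the algebra {a·I + b·J : a,b ∈ ℝ} where I is the identity matrix and J = [[0,1],[-1,0]]. -/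
/-!
If a solvable subalgebra `T ⊆ 𝔤𝔩₂(ℝ)` is not upper triangular, it contains a matrix `X` with
`X 1 0 ≠ 0`, and by its real Jordan form `X` is conjugate to `s + μH`, `s + μJ` or `s + E`
(`H = diag(1, -1)`, `E = e₁₂`, `J` the rotation by a right angle). Since `T` is stable under
`ad X`, an element of `T` outside the triangular algebras (for `H` and `E`), resp. outside
`ℝ[J]` (for `J`), yields three elements of `T` each of which is a multiple of the bracket of the
other two; they lie in every term of the derived series, contradicting solvability. So every
solvable subalgebra is conjugate into the upper triangular matrices or into `ℝ[J]`, both of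
which are solvable, and a maximal one is conjugate onto them.
-/

open Matrix LieAlgebra Matrix.GeneralLinearGroup

attribute [local instance 100] LieRing.ofAssociativeRing

theorem LieAlgebra.isSolvable_of_lie_lie_eq_zero {L : Type*} [LieRing L]
    (h : ∀ a b c d : L, ⁅⁅a, b⁆, ⁅c, d⁆⁆ = 0) : IsSolvable L := by
  refine IsSolvable.mk (R := ℤ) (k := 2) ?_
  rw [show derivedSeries ℤ L 2 = ⁅derivedSeries ℤ L 1, derivedSeries ℤ L 1⁆ from
    derivedSeriesOfIdeal_succ ℤ L ⊤ 1, LieSubmodule.lie_eq_bot_iff]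
  intro x hx y hy
  replace hx : x ∈ Submodule.span ℤ {⁅a, b⁆ | (a : L) (b : L)} := by
    rw [← coe_derivedSeries_one_eq]; exact hx
  replace hy : y ∈ Submodule.span ℤ {⁅a, b⁆ | (a : L) (b : L)} := by
    rw [← coe_derivedSeries_one_eq]; exact hy
  induction hx using Submodule.span_induction with
  | mem x hx =>
    obtain ⟨a, b, rfl⟩ := hx
    induction hy using Submodule.span_induction with
    | mem y hy => obtain ⟨c, d, rfl⟩ := hy; exact h a b c d
    | zero => exact lie_zero _
    | add _ _ _ _ h₁ h₂ => rw [lie_add, h₁, h₂, add_zero]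
    | smul t _ _ h₁ => rw [lie_smul, h₁, smul_zero]
  | zero => exact zero_lie _
  | add _ _ _ _ h₁ h₂ => rw [add_lie, h₁, h₂, add_zero]
  | smul t _ _ h₁ => rw [smul_lie, h₁, smul_zero]

section

variable {R L : Type*} [CommRing R] [LieRing L] [LieAlgebra R L]

theorem LieAlgebra.not_isSolvable_of_lie_triple {x y z : L} (hx : x ≠ 0) {a b c : R}
    (hxyz : x = a • ⁅y, z⁆) (hyzx : y = b • ⁅z, x⁆) (hzxy : z = c • ⁅x, y⁆) :
    ¬ IsSolvable L := by
  have mem_derivedSeries : ∀ k, x ∈ derivedSeries R L k ∧ y ∈ derivedSeries R L k ∧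
      z ∈ derivedSeries R L k := by
    intro k
    induction k with
    | zero => simp
    | succ k ih =>
      obtain ⟨hx, hy, hz⟩ := ih
      rw [show derivedSeries R L (k + 1) = ⁅derivedSeries R L k, derivedSeries R L k⁆ from
        derivedSeriesOfIdeal_succ R L ⊤ k]
      refine ⟨?_, ?_, ?_⟩
      · rw [hxyz]; exact SMulMemClass.smul_mem a (LieSubmodule.lie_mem_lie hy hz)
      · rw [hyzx]; exact SMulMemClass.smul_mem b (LieSubmodule.lie_mem_lie hz hx)
      · rw [hzxy]; exact SMulMemClass.smul_mem c (LieSubmodule.lie_mem_lie hx hy)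
  intro hL
  obtain ⟨k, hk⟩ := IsSolvable.solvable R L
  exact hx (by simpa [hk] using (mem_derivedSeries k).1)

theorem LieSubalgebra.not_isSolvable_of_lie_triple (T : LieSubalgebra R L) {x y z : L}
    (hxT : x ∈ T) (hyT : y ∈ T) (hzT : z ∈ T) (hx : x ≠ 0) {a b c : R}
    (hxyz : x = a • ⁅y, z⁆) (hyzx : y = b • ⁅z, x⁆) (hzxy : z = c • ⁅x, y⁆) :
    ¬ IsSolvable T :=
  LieAlgebra.not_isSolvable_of_lie_triple (R := R) (x := ⟨x, hxT⟩) (y := ⟨y, hyT⟩) (z := ⟨z, hzT⟩)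
    (fun h ↦ hx (congrArg Subtype.val h)) (Subtype.ext hxyz) (Subtype.ext hyzx) (Subtype.ext hzxy)

theorem LieSubalgebra.smul_mem_iff {K : Type*} [Field K] [LieAlgebra K L] (T : LieSubalgebra K L)
    {c : K} (hc : c ≠ 0) {x : L} : c • x ∈ T ↔ x ∈ T :=
  T.toSubmodule.smul_mem_iff hc

variable {L' : Type*} [LieRing L'] [LieAlgebra R L']

theorem LieSubalgebra.isSolvable_map_equiv (e : L ≃ₗ⁅R⁆ L') {T : LieSubalgebra R L}
    (hT : IsSolvable T) : IsSolvable (T.map (e : L →ₗ⁅R⁆ L')) :=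
  (solvable_iff_equiv_solvable (e.lieSubalgebraMap T)).mp hT

theorem LieSubalgebra.map_eq_of_le_of_isSolvable {S W : LieSubalgebra R L}
    (hmax : ∀ T : LieSubalgebra R L, IsSolvable T → S ≤ T → S = T) (e : L ≃ₗ⁅R⁆ L)
    (hW : IsSolvable W) (h : S.map (e : L →ₗ⁅R⁆ L) ≤ W) : S.map (e : L →ₗ⁅R⁆ L) = W := by
  have hS : S = W.map (e.symm : L →ₗ⁅R⁆ L) :=
    hmax _ (isSolvable_map_equiv e.symm hW) fun x hx ↦
      ⟨e x, h ⟨x, hx, rfl⟩, e.symm_apply_apply x⟩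
  refine le_antisymm h fun y hy ↦ ⟨e.symm y, ?_, e.apply_symm_apply y⟩
  rw [hS]
  exact ⟨y, hy, rfl⟩

end

section Matrices

variable {n R : Type*} [Fintype n] [DecidableEq n] [CommRing R]

theorem Matrix.lie_smul_one_add (s : R) (W Y : Matrix n n R) :
    ⁅s • (1 : Matrix n n R) + W, Y⁆ = ⁅W, Y⁆ := by
  rw [add_lie, smul_lie, Ring.lie_def, one_mul, mul_one, sub_self, smul_zero, zero_add]

noncomputable def Matrix.GeneralLinearGroup.conjLieEquiv (g : GL n R) :
    Matrix n n R ≃ₗ⁅R⁆ Matrix n n R :=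
  lieConj (g : Matrix n n R) (Units.invertible g)

namespace Matrix.GeneralLinearGroup

@[simp]
theorem conjLieEquiv_apply (g : GL n R) (A : Matrix n n R) :
    conjLieEquiv g A = g * A * ((g⁻¹ : GL n R) : Matrix n n R) := by
  rw [conjLieEquiv, lieConj_apply, coe_units_inv]

theorem map_conjLieEquiv_mul (g h : GL n R) (T : LieSubalgebra R (Matrix n n R)) :
    T.map (conjLieEquiv (h * g) : Matrix n n R →ₗ⁅R⁆ Matrix n n R) =
      (T.map (conjLieEquiv g : Matrix n n R →ₗ⁅R⁆ Matrix n n R)).map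
        (conjLieEquiv h : Matrix n n R →ₗ⁅R⁆ Matrix n n R) := by
  ext B
  simp only [LieSubalgebra.mem_map, conjLieEquiv_apply, LieEquiv.coe_toLieHom, Units.val_mul,
    _root_.mul_inv_rev, exists_exists_and_eq_and, mul_assoc]

theorem exists_conjLieEquiv_eq_of_mul_eq {P X W : Matrix n n R} (hP : IsUnit P.det)
    (h : X * P = P * W) : ∃ g : GL n R, conjLieEquiv g X = W := by
  set u : GL n R := ((isUnit_iff_isUnit_det P).mpr hP).unit
  refine ⟨u⁻¹, ?_⟩
  have hu : (u : Matrix n n R) = P := rfl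
  calc conjLieEquiv u⁻¹ X = ↑u⁻¹ * (X * P) := by rw [conjLieEquiv_apply, inv_inv, hu, mul_assoc]
    _ = W := by rw [h, ← hu, ← mul_assoc, Units.inv_mul, one_mul]

end Matrix.GeneralLinearGroup

end Matrices

namespace Gl2

section Subalgebras

variable (R : Type*) [CommRing R]

def upperTriangular : LieSubalgebra R (Matrix (Fin 2) (Fin 2) R) where
  carrier := {B | B 1 0 = 0}
  add_mem' ha hb := by simp_all
  zero_mem' := rfl
  smul_mem' c a ha := by simp_all
  lie_mem' ha hb := by simp_all [Ring.lie_def, mul_apply, Fin.sum_univ_two]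

def lowerTriangular : LieSubalgebra R (Matrix (Fin 2) (Fin 2) R) where
  carrier := {B | B 0 1 = 0}
  add_mem' ha hb := by simp_all
  zero_mem' := rfl
  smul_mem' c a ha := by simp_all
  lie_mem' ha hb := by simp_all [Ring.lie_def, mul_apply, Fin.sum_univ_two]

def rotationScaling : LieSubalgebra R (Matrix (Fin 2) (Fin 2) R) where
  carrier := {B | B 0 0 = B 1 1 ∧ B 1 0 = -B 0 1}
  add_mem' := by
    rintro a b ⟨ha₀, ha₁⟩ ⟨hb₀, hb₁⟩
    exact ⟨by simp [ha₀, hb₀], by simp [ha₁, hb₁, add_comm]⟩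
  zero_mem' := by simp
  smul_mem' c a ha := by simp_all
  lie_mem' := by
    rintro a b ⟨ha₀, ha₁⟩ ⟨hb₀, hb₁⟩
    constructor <;> simp [Ring.lie_def, mul_apply, Fin.sum_univ_two, ha₀, ha₁, hb₀, hb₁] <;> ring

variable {R}

@[simp] theorem mem_upperTriangular {B : Matrix (Fin 2) (Fin 2) R} :
    B ∈ upperTriangular R ↔ B 1 0 = 0 := Iff.rfl

@[simp] theorem mem_lowerTriangular {B : Matrix (Fin 2) (Fin 2) R} :
    B ∈ lowerTriangular R ↔ B 0 1 = 0 := Iff.rfl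

@[simp] theorem mem_rotationScaling {B : Matrix (Fin 2) (Fin 2) R} :
    B ∈ rotationScaling R ↔ B 0 0 = B 1 1 ∧ B 1 0 = -B 0 1 := Iff.rfl

theorem coe_rotationScaling : (rotationScaling R : Set (Matrix (Fin 2) (Fin 2) R)) =
    {B | ∃ a b : R, B = a • 1 + b • !![0, 1; -1, 0]} := by
  ext B
  simp only [SetLike.mem_coe, mem_rotationScaling, Set.mem_ofPred_eq]
  constructor
  · rintro ⟨h₀, h₁⟩
    refine ⟨B 0 0, B 0 1, ?_⟩
    ext i j
    fin_cases i <;> fin_cases j <;> simp [h₀, h₁]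
  · rintro ⟨a, b, rfl⟩
    simp

instance : IsLieAbelian (rotationScaling R) where
  trivial := by
    rintro ⟨a, ha₀, ha₁⟩ ⟨b, hb₀, hb₁⟩
    apply Subtype.ext
    ext i j
    fin_cases i <;> fin_cases j <;>
      simp [Ring.lie_def, mul_apply, Fin.sum_univ_two, ha₀, ha₁, hb₀, hb₁] <;> ring

theorem isSolvable_upperTriangular : IsSolvable (upperTriangular R) :=
  isSolvable_of_lie_lie_eq_zero fun ⟨a, ha⟩ ⟨b, hb⟩ ⟨c, hc⟩ ⟨d, hd⟩ ↦ by
    rw [mem_upperTriangular] at ha hb hc hd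
    apply Subtype.ext
    ext i j
    fin_cases i <;> fin_cases j <;>
      simp [Ring.lie_def, mul_apply, Fin.sum_univ_two, ha, hb, hc, hd] <;> ring

end Subalgebras

def swap (R : Type*) [CommRing R] : GL (Fin 2) R :=
  have h : !![0, 1; 1, 0] * !![0, 1; 1, 0] = (1 : Matrix (Fin 2) (Fin 2) R) := by
    ext i j; fin_cases i <;> fin_cases j <;> simp
  ⟨!![0, 1; 1, 0], !![0, 1; 1, 0], h, h⟩

theorem map_conjLieEquiv_swap_le {R : Type*} [CommRing R]
    {T : LieSubalgebra R (Matrix (Fin 2) (Fin 2) R)} (h : T ≤ lowerTriangular R) :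
    T.map (conjLieEquiv (swap R) : Matrix (Fin 2) (Fin 2) R →ₗ⁅R⁆ _) ≤ upperTriangular R := by
  rintro _ ⟨A, hA, rfl⟩
  simpa [swap, mul_apply, vecMul, dotProduct, Fin.sum_univ_two] using h hA

local notation "𝔤𝔩₂" => Matrix (Fin 2) (Fin 2) ℝ

noncomputable def H : 𝔤𝔩₂ := !![1, 0; 0, -1]
noncomputable def E : 𝔤𝔩₂ := !![0, 1; 0, 0]
noncomputable def F : 𝔤𝔩₂ := !![0, 0; 1, 0]
noncomputable def J : 𝔤𝔩₂ := !![0, 1; -1, 0]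

theorem lie_H (Y : 𝔤𝔩₂) : ⁅H, Y⁆ = !![0, 2 * Y 0 1; -(2 * Y 1 0), 0] := by
  ext i j
  fin_cases i <;> fin_cases j <;>
    simp [H, Ring.lie_def, mul_apply, vecMul, dotProduct, Fin.sum_univ_two] <;> ring

theorem lie_E (Y : 𝔤𝔩₂) : ⁅E, Y⁆ = !![Y 1 0, Y 1 1 - Y 0 0; 0, -Y 1 0] := by
  ext i j
  fin_cases i <;> fin_cases j <;>
    simp [E, Ring.lie_def, mul_apply, vecMul, dotProduct, Fin.sum_univ_two]

theorem lie_J (Y : 𝔤𝔩₂) :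
    ⁅J, Y⁆ = !![Y 0 1 + Y 1 0, Y 1 1 - Y 0 0; Y 1 1 - Y 0 0, -(Y 0 1 + Y 1 0)] := by
  ext i j
  fin_cases i <;> fin_cases j <;>
    simp [J, Ring.lie_def, mul_apply, vecMul, dotProduct, Fin.sum_univ_two] <;> ring

theorem le_upperTriangular_or_le_lowerTriangular_of_add_smul_H_mem {T : LieSubalgebra ℝ 𝔤𝔩₂}
    (hT : IsSolvable T) {s μ : ℝ} (hμ : μ ≠ 0) (hX : s • 1 + μ • H ∈ T) :
    T ≤ upperTriangular ℝ ∨ T ≤ lowerTriangular ℝ := by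
  -- `ad H` acts on `E` and `F` by `2` and `-2`, so the `E`- and `F`-components of `Y` are
  -- linear combinations of its first two iterated brackets with `s • 1 + μ • H`.
  have smul_E_mem_and_smul_F_mem : ∀ Y ∈ T, Y 0 1 • E ∈ T ∧ Y 1 0 • F ∈ T := by
    intro Y hY
    have h₁ := T.lie_mem hX hY
    have h₂ := T.lie_mem hX h₁
    simp only [lie_smul_one_add, smul_lie, lie_smul, lie_H] at h₁ h₂
    constructor
    · convert T.add_mem (T.smul_mem (8 * μ ^ 2)⁻¹ h₂) (T.smul_mem (4 * μ)⁻¹ h₁) using 1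
      ext i j; fin_cases i <;> fin_cases j <;> simp [E] <;> field_simp <;> ring
    · convert T.sub_mem (T.smul_mem (8 * μ ^ 2)⁻¹ h₂) (T.smul_mem (4 * μ)⁻¹ h₁) using 1
      ext i j; fin_cases i <;> fin_cases j <;> simp [F] <;> field_simp <;> ring
  by_contra! h
  obtain ⟨Y, hY, hY₁₀⟩ := SetLike.not_le_iff_exists.mp h.1
  obtain ⟨Y', hY', hY'₀₁⟩ := SetLike.not_le_iff_exists.mp h.2
  have hE : E ∈ T := (T.smul_mem_iff hY'₀₁).1 (smul_E_mem_and_smul_F_mem Y' hY').1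
  have hF : F ∈ T := (T.smul_mem_iff hY₁₀).1 (smul_E_mem_and_smul_F_mem Y hY).2
  have hH : H ∈ T := by
    convert T.lie_mem hE hF using 1
    rw [lie_E]; ext i j; fin_cases i <;> fin_cases j <;> simp [H, F]
  refine T.not_isSolvable_of_lie_triple hH (T.add_mem hE hF) (T.sub_mem hE hF) ?_
    (a := -1 / 2) (b := -1 / 2) (c := 1 / 2) ?_ ?_ ?_ hT
  · exact fun h ↦ by simpa [H] using congrFun (congrFun h 0) 0
  all_goals
    ext i j; fin_cases i <;> fin_cases j <;> simp [H, E, F, Ring.lie_def] <;> norm_num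

theorem le_upperTriangular_of_add_E_mem {T : LieSubalgebra ℝ 𝔤𝔩₂} (hT : IsSolvable T) {s : ℝ}
    (hX : s • 1 + E ∈ T) : T ≤ upperTriangular ℝ := by
  by_contra hU
  obtain ⟨Y, hY, hY₁₀ : Y 1 0 ≠ 0⟩ := SetLike.not_le_iff_exists.mp hU
  set Z : 𝔤𝔩₂ := !![Y 1 0, Y 1 1 - Y 0 0; 0, -Y 1 0]
  have hZ : Z ∈ T := by
    have h : ⁅s • 1 + E, Y⁆ = Z := by rw [lie_smul_one_add, lie_E]
    exact h ▸ T.lie_mem hX hY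
  have hE : E ∈ T := by
    have h : ⁅Z, s • 1 + E⁆ = (2 * Y 1 0) • E := by
      rw [← lie_skew, lie_smul_one_add, lie_E]
      ext i j; fin_cases i <;> fin_cases j <;> simp [Z, E]; ring
    exact (T.smul_mem_iff (mul_ne_zero two_ne_zero hY₁₀)).1 (h ▸ T.lie_mem hZ hX)
  have hH : H ∈ T := by
    have h : Z - (Y 1 1 - Y 0 0) • E = Y 1 0 • H := by
      ext i j; fin_cases i <;> fin_cases j <;> simp [Z, E, H]
    exact (T.smul_mem_iff hY₁₀).1 (h ▸ T.sub_mem hZ (T.smul_mem _ hE))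
  rcases le_upperTriangular_or_le_lowerTriangular_of_add_smul_H_mem hT one_ne_zero (s := 0)
    (by simpa using hH) with h | h
  · exact hY₁₀ (h hY)
  · simpa [E] using h hE

theorem le_rotationScaling_of_add_smul_J_mem {T : LieSubalgebra ℝ 𝔤𝔩₂} (hT : IsSolvable T)
    {s μ : ℝ} (hμ : μ ≠ 0) (hX : s • 1 + μ • J ∈ T) : T ≤ rotationScaling ℝ := by
  by_contra hC
  obtain ⟨Y, hY, hYC⟩ := SetLike.not_le_iff_exists.mp hC
  set e := Y 0 1 + Y 1 0
  set f := Y 1 1 - Y 0 0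
  have hn : -(4 * (e ^ 2 + f ^ 2)) ≠ 0 := by
    intro hn
    have he : e = 0 := by nlinarith
    have hf : f = 0 := by nlinarith
    exact hYC ⟨by linarith, by linarith⟩
  set P : 𝔤𝔩₂ := !![e, f; f, -e]
  set Q : 𝔤𝔩₂ := !![2 * f, -(2 * e); -(2 * e), -(2 * f)]
  have lie_J_P : ⁅J, P⁆ = Q := by
    rw [lie_J]; ext i j; fin_cases i <;> fin_cases j <;> simp [P, Q] <;> ring
  have lie_Q_J : ⁅Q, J⁆ = (4 : ℝ) • P := by
    rw [← lie_skew, lie_J]; ext i j; fin_cases i <;> fin_cases j <;> simp [P, Q] <;> ring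
  have lie_P_Q : ⁅P, Q⁆ = (-(4 * (e ^ 2 + f ^ 2))) • J := by
    ext i j; fin_cases i <;> fin_cases j <;> simp [P, Q, J, Ring.lie_def] <;> ring
  have hP : P ∈ T := by
    have h : ⁅s • 1 + μ • J, Y⁆ = μ • P := by rw [lie_smul_one_add, smul_lie, lie_J]
    exact (T.smul_mem_iff hμ).1 (h ▸ T.lie_mem hX hY)
  have hQ : Q ∈ T := by
    have h : ⁅s • 1 + μ • J, P⁆ = μ • Q := by rw [lie_smul_one_add, smul_lie, lie_J_P]
    exact (T.smul_mem_iff hμ).1 (h ▸ T.lie_mem hX hP)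
  have hJ : J ∈ T := (T.smul_mem_iff hn).1 (lie_P_Q ▸ T.lie_mem hP hQ)
  refine T.not_isSolvable_of_lie_triple hJ hP hQ ?_ (a := (-(4 * (e ^ 2 + f ^ 2)))⁻¹)
    (b := 1 / 4) (c := 1) ?_ ?_ ?_ hT
  · exact fun h ↦ by simpa [J] using congrFun (congrFun h 0) 1
  · rw [lie_P_Q, smul_smul, inv_mul_cancel₀ hn, one_smul]
  · rw [lie_Q_J, smul_smul]; norm_num
  · rw [lie_J_P, one_smul]

theorem exists_conjLieEquiv_eq_normalForm {X : 𝔤𝔩₂} (hX : X 1 0 ≠ 0) :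
    ∃ (g : GL (Fin 2) ℝ) (s : ℝ), (∃ μ : ℝ, μ ≠ 0 ∧ conjLieEquiv g X = s • 1 + μ • H) ∨
      (∃ μ : ℝ, μ ≠ 0 ∧ conjLieEquiv g X = s • 1 + μ • J) ∨ conjLieEquiv g X = s • 1 + E := by
  obtain ⟨s, p, q, r, rfl⟩ : ∃ s p q r : ℝ, X = !![s + p, q; r, s - p] :=
    ⟨(X 0 0 + X 1 1) / 2, (X 0 0 - X 1 1) / 2, X 0 1, X 1 0, by
      ext i j; fin_cases i <;> fin_cases j <;> simp <;> ring⟩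
  replace hX : r ≠ 0 := by simpa using hX
  -- The columns of `P` are a rotation basis, a Jordan basis or an eigenbasis of `X` according to
  -- the sign of the discriminant `p ^ 2 + q * r`; `r ≠ 0` makes them independent.
  rcases lt_trichotomy (p ^ 2 + q * r) 0 with hneg | hzero | hpos
  · set μ := √(-(p ^ 2 + q * r))
    have hμ : μ ^ 2 = -(p ^ 2 + q * r) := Real.sq_sqrt (by linarith)
    have hμ0 : μ ≠ 0 := (Real.sqrt_pos.mpr (by linarith)).ne'
    obtain ⟨g, hg⟩ := exists_conjLieEquiv_eq_of_mul_eq (X := !![s + p, q; r, s - p])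
      (P := !![p, μ; r, 0]) (W := s • 1 + μ • J) (by simpa [det_fin_two] using And.intro hμ0 hX) (by
        ext i j; fin_cases i <;> fin_cases j <;> simp [J, mul_apply, Fin.sum_univ_two] <;>
          linarith)
    exact ⟨g, s, .inr (.inl ⟨μ, hμ0, hg⟩)⟩
  · obtain ⟨g, hg⟩ := exists_conjLieEquiv_eq_of_mul_eq (X := !![s + p, q; r, s - p])
      (P := !![p, 1; r, 0]) (W := s • 1 + E) (by simpa [det_fin_two] using hX) (by
        ext i j; fin_cases i <;> fin_cases j <;> simp [E, mul_apply, Fin.sum_univ_two] <;>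
          linarith)
    exact ⟨g, s, .inr (.inr hg)⟩
  · set μ := √(p ^ 2 + q * r)
    have hμ : μ ^ 2 = p ^ 2 + q * r := Real.sq_sqrt hpos.le
    have hμ0 : μ ≠ 0 := (Real.sqrt_pos.mpr hpos).ne'
    have hdet : (!![p + μ, p - μ; r, r] : 𝔤𝔩₂).det = 2 * μ * r := by
      rw [det_fin_two_of]; ring
    obtain ⟨g, hg⟩ := exists_conjLieEquiv_eq_of_mul_eq (X := !![s + p, q; r, s - p])
      (P := !![p + μ, p - μ; r, r]) (W := s • 1 + μ • H) (by simp [hdet, hμ0, hX]) (by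
        ext i j; fin_cases i <;> fin_cases j <;> simp [H, mul_apply, Fin.sum_univ_two] <;>
          linarith)
    exact ⟨g, s, .inl ⟨μ, hμ0, hg⟩⟩

theorem exists_map_conjLieEquiv_le {T : LieSubalgebra ℝ 𝔤𝔩₂} (hT : IsSolvable T) :
    ∃ g : GL (Fin 2) ℝ, T.map (conjLieEquiv g : 𝔤𝔩₂ →ₗ⁅ℝ⁆ 𝔤𝔩₂) ≤ upperTriangular ℝ ∨
      T.map (conjLieEquiv g : 𝔤𝔩₂ →ₗ⁅ℝ⁆ 𝔤𝔩₂) ≤ rotationScaling ℝ := by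
  by_cases hU : T ≤ upperTriangular ℝ
  · refine ⟨1, .inl ?_⟩
    rintro _ ⟨A, hA, rfl⟩
    simpa using hU hA
  obtain ⟨X, hXT, hX⟩ := SetLike.not_le_iff_exists.mp hU
  obtain ⟨g, s, hX'⟩ := exists_conjLieEquiv_eq_normalForm hX
  have hT' := LieSubalgebra.isSolvable_map_equiv (conjLieEquiv g) hT
  have hgX : conjLieEquiv g X ∈ T.map (conjLieEquiv g : 𝔤𝔩₂ →ₗ⁅ℝ⁆ 𝔤𝔩₂) := ⟨X, hXT, rfl⟩
  rcases hX' with ⟨μ, hμ, hgH⟩ | ⟨μ, hμ, hgJ⟩ | hgE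
  · rcases le_upperTriangular_or_le_lowerTriangular_of_add_smul_H_mem hT' hμ (hgH ▸ hgX)
      with h | h
    · exact ⟨g, .inl h⟩
    · exact ⟨swap ℝ * g, .inl (map_conjLieEquiv_mul g _ T ▸ map_conjLieEquiv_swap_le h)⟩
  · exact ⟨g, .inr (le_rotationScaling_of_add_smul_J_mem hT' hμ (hgJ ▸ hgX))⟩
  · exact ⟨g, .inl (le_upperTriangular_of_add_E_mem hT' (hgE ▸ hgX))⟩

end Gl2

/-- every maximal solvable Lie subalgebra of gl(2,ℝ) is conjugate by an
element of GL(2,ℝ) either to the upper triangular matrices or to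
{a·I + b·J : a, b ∈ ℝ} with J = [[0,1],[-1,0]]. -/
theorem stmt9 (S : LieSubalgebra ℝ (Matrix (Fin 2) (Fin 2) ℝ))
    (hsolv : LieAlgebra.IsSolvable S)
    (hmax : ∀ T : LieSubalgebra ℝ (Matrix (Fin 2) (Fin 2) ℝ),
      LieAlgebra.IsSolvable T → S ≤ T → S = T) :
    ∃ g : GL (Fin 2) ℝ,
      {B : Matrix (Fin 2) (Fin 2) ℝ | ∃ A ∈ S, B = (g : Matrix (Fin 2) (Fin 2) ℝ) * A * (↑g⁻¹ : Matrix (Fin 2) (Fin 2) ℝ)} =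
          {B : Matrix (Fin 2) (Fin 2) ℝ | B 1 0 = 0} ∨
      {B : Matrix (Fin 2) (Fin 2) ℝ | ∃ A ∈ S, B = (g : Matrix (Fin 2) (Fin 2) ℝ) * A * (↑g⁻¹ : Matrix (Fin 2) (Fin 2) ℝ)} =
          {B : Matrix (Fin 2) (Fin 2) ℝ | ∃ a b : ℝ, B = a • (1 : Matrix (Fin 2) (Fin 2) ℝ) + b • !![0, 1; -1, 0]} := by
  obtain ⟨g, hg⟩ := Gl2.exists_map_conjLieEquiv_le hsolv
  have hS : {B | ∃ A ∈ S,
        B = (g : Matrix (Fin 2) (Fin 2) ℝ) * A * (↑g⁻¹ : Matrix (Fin 2) (Fin 2) ℝ)} = (S.map (conjLieEquiv g : Matrix (Fin 2) (Fin 2) ℝ →ₗ⁅ℝ⁆ Matrix (Fin 2) (Fin 2) ℝ) :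
        Set (Matrix (Fin 2) (Fin 2) ℝ)) :=
    Set.ext fun B ↦ by simp [eq_comm]
  refine ⟨g, hg.imp (fun h ↦ ?_) (fun h ↦ ?_)⟩
  · rw [hS, S.map_eq_of_le_of_isSolvable hmax _ Gl2.isSolvable_upperTriangular h]
    rfl
  · rw [hS, S.map_eq_of_le_of_isSolvable hmax _ inferInstance h, Gl2.coe_rotationScaling]
end

section
/- The Lie subalgebra of Der(ℂ[x,y]) spanned by x·∂/∂x, y·∂/∂y, ∂/∂x, ∂/∂y, y·∂/∂x, …, y^k·∂/∂x (for k ≥ 1) is solvable, and its derived subalgebra equals the span of ∂/∂x, ∂/∂y, y·∂/∂x, …, y^k·∂/∂x. -/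
/-!
The vector fields `∂/∂y` and `yⁱ·∂/∂x` (`i ≤ k`) are common eigenvectors of `ad (x·∂/∂x)` and
`ad (y·∂/∂y)`, with eigenvalue pairs `(0, -1)` and `(-1, i)`, and the two Euler fields commute.
Hence every bracket in `g` lies in their span, and, having a nonzero eigenvalue, each of them is
itself a bracket. Among
these, the only nonzero brackets are `[∂/∂y, yⁱ·∂/∂x] = i·yⁱ⁻¹·∂/∂x`, so the second derived
algebra lies in the abelian span of the `yⁱ·∂/∂x`, and the third one vanishes.
-/

open MvPolynomial

noncomputable section

open Submodule

section LieSpan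

variable {R L : Type*} [CommRing R] [LieRing L] [LieAlgebra R L]

theorem lie_mem_of_mem_span {s t : Set L} {P : Submodule R L}
    (h : ∀ a ∈ s, ∀ b ∈ t, ⁅a, b⁆ ∈ P) {x y : L}
    (hx : x ∈ span R s) (hy : y ∈ span R t) : ⁅x, y⁆ ∈ P := by
  have hle : map₂ (LieModule.toEnd R L L : L →ₗ[R] Module.End R L)
      (span R s) (span R t) ≤ P := by
    rw [map₂_span_span, span_le]
    rintro _ ⟨a, ha, b, hb, rfl⟩
    exact h a ha b hb
  exact hle (apply_mem_map₂ _ hx hy)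

theorem lie_mem_swap {P : Submodule R L} {x y : L} (h : ⁅x, y⁆ ∈ P) : ⁅y, x⁆ ∈ P :=
  lie_skew y x ▸ neg_mem h

open LieAlgebra in
theorem LieSubalgebra.coe_mem_of_mem_derivedSeries_succ {K : LieSubalgebra R L} {n : ℕ}
    {P Q : Submodule R L} (hP : ∀ x ∈ derivedSeries R K n, (x : L) ∈ P)
    (hPQ : ∀ a ∈ P, ∀ b ∈ P, ⁅a, b⁆ ∈ Q) {x : K} (hx : x ∈ derivedSeries R K (n + 1)) :
    (x : L) ∈ Q := by
  rw [derivedSeries_def, derivedSeriesOfIdeal_succ, ← derivedSeries_def,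
    ← LieSubmodule.mem_toSubmodule, LieSubmodule.lieIdeal_oper_eq_linear_span'] at hx
  suffices h : span R {m | ∃ y ∈ derivedSeries R K n, ∃ z ∈ derivedSeries R K n,
      ⁅y, z⁆ = m} ≤ Q.comap (K.incl : K →ₗ[R] L) from h hx
  rw [span_le]
  rintro _ ⟨y, hy, z, hz, rfl⟩
  exact hPQ _ (hP y hy) _ (hP z hz)

end LieSpan

theorem Der2.ext_Xv_Yv {D E : Der2} (hx : D Xv = E Xv) (hy : D Yv = E Yv) : D = E :=
  MvPolynomial.derivation_ext fun i => by fin_cases i; exacts [hx, hy]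

@[simp]
theorem vf_apply_Xv (p q : R2) : vf p q Xv = p := by simp [vf, Xv, mkDerivation_X]

@[simp]
theorem vf_apply_Yv (p q : R2) : vf p q Yv = q := by simp [vf, Yv, mkDerivation_X]

theorem lie_xDx_yDy : ⁅vf Xv 0, vf 0 Yv⁆ = 0 := by
  apply Der2.ext_Xv_Yv <;> simp [Derivation.commutator_apply]

theorem lie_xDx_Dy : ⁅vf Xv 0, vf 0 1⁆ = 0 := by
  apply Der2.ext_Xv_Yv <;> simp [Derivation.commutator_apply]

theorem lie_yDy_Dy : ⁅vf 0 Yv, vf 0 1⁆ = -vf 0 1 := by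
  apply Der2.ext_Xv_Yv <;> simp [Derivation.commutator_apply]

theorem lie_xDx_yPowDx (i : ℕ) : ⁅vf Xv 0, vf (Yv ^ i) 0⁆ = -vf (Yv ^ i) 0 := by
  apply Der2.ext_Xv_Yv <;> simp [Derivation.commutator_apply, Derivation.leibniz_pow]

theorem lie_yDy_yPowDx (i : ℕ) : ⁅vf 0 Yv, vf (Yv ^ i) 0⁆ = i • vf (Yv ^ i) 0 := by
  apply Der2.ext_Xv_Yv <;> simp [Derivation.commutator_apply, Derivation.leibniz_pow]
  rcases i with _ | i <;> simp [pow_succ]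

theorem lie_Dy_yPowDx (i : ℕ) : ⁅vf 0 1, vf (Yv ^ i) 0⁆ = i • vf (Yv ^ (i - 1)) 0 := by
  apply Der2.ext_Xv_Yv <;> simp [Derivation.commutator_apply, Derivation.leibniz_pow]

theorem lie_yPowDx_yPowDx (i j : ℕ) : ⁅vf (Yv ^ i) 0, vf (Yv ^ j) 0⁆ = 0 := by
  apply Der2.ext_Xv_Yv <;> simp [Derivation.commutator_apply, Derivation.leibniz_pow]

def yPowDx (k : ℕ) : Set Der2 := {D | ∃ i ≤ k, D = vf (Yv ^ i) 0}

def derivedGens (k : ℕ) : Set Der2 := insert (vf 0 1) (yPowDx k)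

def triangularGens (k : ℕ) : Set Der2 := insert (vf Xv 0) (insert (vf 0 Yv) (derivedGens k))

theorem yPowDx_eq_insert (k : ℕ) :
    yPowDx k = insert (vf 1 0) {D | ∃ i, 1 ≤ i ∧ i ≤ k ∧ D = vf (Yv ^ i) 0} := by
  ext D
  constructor
  · rintro ⟨_ | i, hi, rfl⟩
    · exact .inl (by rw [pow_zero])
    · exact .inr ⟨i + 1, by omega, hi, rfl⟩
  · rintro (rfl | ⟨i, -, hi, rfl⟩)
    · exact ⟨0, k.zero_le, by rw [pow_zero]⟩
    · exact ⟨i, hi, rfl⟩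

theorem derivedGens_eq (k : ℕ) :
    {vf 1 0, vf 0 1} ∪ {D | ∃ i, 1 ≤ i ∧ i ≤ k ∧ D = vf (Yv ^ i) 0} = derivedGens k := by
  rw [derivedGens, yPowDx_eq_insert, Set.insert_comm, Set.insert_union, Set.singleton_union]

theorem triangularGens_eq (k : ℕ) :
    {vf Xv 0, vf 0 Yv, vf 1 0, vf 0 1} ∪ {D | ∃ i, 1 ≤ i ∧ i ≤ k ∧ D = vf (Yv ^ i) 0} =
      triangularGens k := by
  rw [triangularGens, ← derivedGens_eq]
  simp only [Set.insert_union]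

theorem lie_mem_span_yPowDx_of_mem {k : ℕ} {a b : Der2} (ha : a ∈ derivedGens k)
    (hb : b ∈ derivedGens k) : ⁅a, b⁆ ∈ span ℂ (yPowDx k) := by
  have lie_Dy_mem : ∀ i ≤ k, ⁅vf 0 1, vf (Yv ^ i) 0⁆ ∈ span ℂ (yPowDx k) := fun i hi => by
    rw [lie_Dy_yPowDx]
    exact nsmul_mem (subset_span (show _ ∈ yPowDx k from ⟨i - 1, by omega, rfl⟩)) i
  rcases ha with rfl | ⟨i, hi, rfl⟩ <;> rcases hb with rfl | ⟨j, hj, rfl⟩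
  · rw [lie_self]; exact zero_mem _
  · exact lie_Dy_mem j hj
  · exact lie_mem_swap (lie_Dy_mem i hi)
  · rw [lie_yPowDx_yPowDx]; exact zero_mem _

theorem lie_mem_span_derivedGens_of_mem {k : ℕ} {a b : Der2} (ha : a ∈ triangularGens k)
    (hb : b ∈ triangularGens k) : ⁅a, b⁆ ∈ span ℂ (derivedGens k) := by
  have lie_xDx_mem : ∀ c ∈ derivedGens k, ⁅vf Xv 0, c⁆ ∈ span ℂ (derivedGens k) := by
    rintro c (rfl | ⟨i, hi, rfl⟩)
    · rw [lie_xDx_Dy]; exact zero_mem _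
    · rw [lie_xDx_yPowDx]; exact neg_mem (subset_span (.inr ⟨i, hi, rfl⟩))
  have lie_yDy_mem : ∀ c ∈ derivedGens k, ⁅vf 0 Yv, c⁆ ∈ span ℂ (derivedGens k) := by
    rintro c (rfl | ⟨i, hi, rfl⟩)
    · rw [lie_yDy_Dy]; exact neg_mem (subset_span (.inl rfl))
    · rw [lie_yDy_yPowDx]; exact nsmul_mem (subset_span (.inr ⟨i, hi, rfl⟩)) i
  rcases ha with rfl | rfl | ha <;> rcases hb with rfl | rfl | hb
  · rw [lie_self]; exact zero_mem _
  · rw [lie_xDx_yDy]; exact zero_mem _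
  · exact lie_xDx_mem b hb
  · exact lie_mem_swap (by rw [lie_xDx_yDy]; exact zero_mem _)
  · rw [lie_self]; exact zero_mem _
  · exact lie_yDy_mem b hb
  · exact lie_mem_swap (lie_xDx_mem a ha)
  · exact lie_mem_swap (lie_yDy_mem a ha)
  · exact span_mono (Set.subset_insert _ _) (lie_mem_span_yPowDx_of_mem ha hb)

theorem lie_mem_span_derivedGens {k : ℕ} {a b : Der2}
    (ha : a ∈ span ℂ (triangularGens k)) (hb : b ∈ span ℂ (triangularGens k)) :
    ⁅a, b⁆ ∈ span ℂ (derivedGens k) :=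
  lie_mem_of_mem_span (fun _ ha _ hb => lie_mem_span_derivedGens_of_mem ha hb) ha hb

theorem lie_mem_span_yPowDx {k : ℕ} {a b : Der2} (ha : a ∈ span ℂ (derivedGens k))
    (hb : b ∈ span ℂ (derivedGens k)) : ⁅a, b⁆ ∈ span ℂ (yPowDx k) :=
  lie_mem_of_mem_span (fun _ ha _ hb => lie_mem_span_yPowDx_of_mem ha hb) ha hb

theorem lie_eq_zero_of_mem_span_yPowDx {k : ℕ} {a b : Der2}
    (ha : a ∈ span ℂ (yPowDx k)) (hb : b ∈ span ℂ (yPowDx k)) :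
    ⁅a, b⁆ = 0 := by
  rw [← mem_bot ℂ]
  refine lie_mem_of_mem_span ?_ ha hb
  rintro _ ⟨i, -, rfl⟩ _ ⟨j, -, rfl⟩
  rw [lie_yPowDx_yPowDx]; exact zero_mem _

/-- The Lie algebra of the triangular automorphisms `(x, y) ↦ (a x + p(y), b y + c)`,
`deg p ≤ k`. -/
def triangularSubalgebra (k : ℕ) : LieSubalgebra ℂ Der2 :=
  { span ℂ (triangularGens k) with
    lie_mem' := fun hx hy =>
      span_mono ((Set.subset_insert _ _).trans (Set.subset_insert _ _))
        (lie_mem_span_derivedGens hx hy) }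

open LieAlgebra LieSubalgebra in
theorem isSolvable_triangularSubalgebra (k : ℕ) :
    IsSolvable (triangularSubalgebra k) := by
  set g := triangularSubalgebra k
  have h1 : ∀ x ∈ derivedSeries ℂ g 1, (x : Der2) ∈ span ℂ (derivedGens k) :=
    fun _ => coe_mem_of_mem_derivedSeries_succ (n := 0) (fun x _ => x.2)
      fun _ ha _ hb => lie_mem_span_derivedGens ha hb
  have h2 : ∀ x ∈ derivedSeries ℂ g 2, (x : Der2) ∈ span ℂ (yPowDx k) :=
    fun _ => coe_mem_of_mem_derivedSeries_succ h1 fun _ ha _ hb => lie_mem_span_yPowDx ha hb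
  have h3 : ∀ x ∈ derivedSeries ℂ g 3, (x : Der2) ∈ (⊥ : Submodule ℂ Der2) :=
    fun _ => coe_mem_of_mem_derivedSeries_succ h2 fun _ ha _ hb =>
      (mem_bot ℂ).2 (lie_eq_zero_of_mem_span_yPowDx ha hb)
  refine (isSolvable_iff ℂ g).2 ⟨3, (LieSubmodule.eq_bot_iff _).2 fun x hx => ?_⟩
  exact Subtype.ext ((mem_bot ℂ).1 (h3 x hx))

theorem triangularGens_subset (k : ℕ) : triangularGens k ⊆ triangularSubalgebra k :=
  subset_span

theorem span_lie_triangularSubalgebra (k : ℕ) :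
    span ℂ {Z : Der2 | ∃ X ∈ triangularSubalgebra k, ∃ Y ∈ triangularSubalgebra k,
      Z = ⁅X, Y⁆} = span ℂ (derivedGens k) := by
  have mem : ∀ D ∈ derivedGens k, D ∈ triangularSubalgebra k := fun D hD =>
    triangularGens_subset k (.inr (.inr hD))
  refine le_antisymm (span_le.2 ?_) (span_le.2 ?_)
  · rintro _ ⟨X, hX, Y, hY, rfl⟩
    exact lie_mem_span_derivedGens hX hY
  · rintro D hD
    refine subset_span ?_
    rcases hD with rfl | ⟨i, hi, rfl⟩
    · refine ⟨vf 0 1, mem _ (.inl rfl), vf 0 Yv, triangularGens_subset k (.inr (.inl rfl)), ?_⟩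
      rw [← lie_skew, lie_yDy_Dy, neg_neg]
    · refine ⟨vf (Yv ^ i) 0, mem _ (.inr ⟨i, hi, rfl⟩), vf Xv 0,
        triangularGens_subset k (.inl rfl), ?_⟩
      rw [← lie_skew, lie_xDx_yPowDx, neg_neg]

theorem stmt10_general (k : ℕ) :
    ∃ g : LieSubalgebra ℂ Der2,
      (g : Set Der2) = (Submodule.span ℂ
          ({vf Xv 0, vf 0 Yv, vf 1 0, vf 0 1} ∪ {D | ∃ i, 1 ≤ i ∧ i ≤ k ∧ D = vf (Yv ^ i) 0})
            : Set Der2) ∧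
      LieAlgebra.IsSolvable g ∧
      Submodule.span ℂ {Z : Der2 | ∃ X ∈ g, ∃ Y ∈ g, Z = ⁅X, Y⁆} =
        Submodule.span ℂ ({vf 1 0, vf 0 1} ∪ {D | ∃ i, 1 ≤ i ∧ i ≤ k ∧ D = vf (Yv ^ i) 0}) := by
  rw [triangularGens_eq, derivedGens_eq]
  refine ⟨triangularSubalgebra k, rfl, isSolvable_triangularSubalgebra k, ?_⟩
  exact span_lie_triangularSubalgebra k

/-- the Lie subalgebra of Der(ℂ[x,y]) spanned by x·∂/∂x, y·∂/∂y, ∂/∂x,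
∂/∂y, y·∂/∂x, …, y^k·∂/∂x (k ≥ 1) is solvable and its derived subalgebra (the span of
all brackets) is the span of ∂/∂x, ∂/∂y, y·∂/∂x, …, y^k·∂/∂x. -/
theorem stmt10 (k : ℕ) (hk : 1 ≤ k) :
    ∃ g : LieSubalgebra ℂ Der2,
      (g : Set Der2) = (Submodule.span ℂ
          ({vf Xv 0, vf 0 Yv, vf 1 0, vf 0 1} ∪ {D | ∃ i, 1 ≤ i ∧ i ≤ k ∧ D = vf (Yv ^ i) 0})
            : Set Der2) ∧
      LieAlgebra.IsSolvable g ∧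
      Submodule.span ℂ {Z : Der2 | ∃ X ∈ g, ∃ Y ∈ g, Z = ⁅X, Y⁆} =
        Submodule.span ℂ ({vf 1 0, vf 0 1} ∪ {D | ∃ i, 1 ≤ i ∧ i ≤ k ∧ D = vf (Yv ^ i) 0}) :=
  stmt10_general k
end
end
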